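/- arXiv:1011.4898 — 2 statements merged into one kernel-verified Lean document; each statement's English description precedes it below -/
import Mathlib

section
/- For any function v assigning an integer to each of the 18 distinct vectors, the sum over the nine sets S₁,…,S₉ of the values of their elements equals twice the sum of v over the 18 vectors; that is, ∑_{j=1}^{9} ∑_{x ∈ S_j} v(x) = 2 · ∑_{x} v(x). In particular this double sum is always even. -/
open Matrix

/-- The nine orthogonal bases (rows of Table 1) of the 18-vector
Kochen–Specker set, as finsets of vectors in `ℝ⁴ = Fin 4 → ℝ`. -/
noncomputable def KSbases : Fin 9 → Finset (Fin 4 → ℝ) :=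
  ![{![0,0,0,1], ![0,0,1,0], ![1,1,0,0], ![1,-1,0,0]},
    {![0,0,0,1], ![0,1,0,0], ![1,0,1,0], ![1,0,-1,0]},
    {![1,-1,1,-1], ![1,-1,-1,1], ![1,1,0,0], ![0,0,1,1]},
    {![1,-1,1,-1], ![1,1,1,1], ![1,0,-1,0], ![0,1,0,-1]},
    {![0,0,1,0], ![0,1,0,0], ![1,0,0,1], ![1,0,0,-1]},
    {![1,-1,-1,1], ![1,1,1,1], ![1,0,0,-1], ![0,1,-1,0]},
    {![1,1,-1,1], ![1,1,1,-1], ![1,-1,0,0], ![0,0,1,1]},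
    {![1,1,-1,1], ![-1,1,1,1], ![1,0,1,0], ![0,1,0,-1]},
    {![1,1,1,-1], ![-1,1,1,1], ![1,0,0,1], ![0,1,-1,0]}]

def KSbasesZ : Fin 9 → Finset (Fin 4 → ℤ) :=
  ![{![0,0,0,1], ![0,0,1,0], ![1,1,0,0], ![1,-1,0,0]},
    {![0,0,0,1], ![0,1,0,0], ![1,0,1,0], ![1,0,-1,0]},
    {![1,-1,1,-1], ![1,-1,-1,1], ![1,1,0,0], ![0,0,1,1]},
    {![1,-1,1,-1], ![1,1,1,1], ![1,0,-1,0], ![0,1,0,-1]},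
    {![0,0,1,0], ![0,1,0,0], ![1,0,0,1], ![1,0,0,-1]},
    {![1,-1,-1,1], ![1,1,1,1], ![1,0,0,-1], ![0,1,-1,0]},
    {![1,1,-1,1], ![1,1,1,-1], ![1,-1,0,0], ![0,0,1,1]},
    {![1,1,-1,1], ![-1,1,1,1], ![1,0,1,0], ![0,1,0,-1]},
    {![1,1,1,-1], ![-1,1,1,1], ![1,0,0,1], ![0,1,-1,0]}]

noncomputable def eR : (Fin 4 → ℤ) → (Fin 4 → ℝ) := fun w i => (w i : ℝ)

lemma eR_inj : Function.Injective eR := by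
  intro a b h
  funext i
  have := congrFun h i
  simpa [eR] using this

lemma eR_vec (a b c d : ℤ) : eR ![a,b,c,d] = ![(a:ℝ),b,c,d] := by
  funext i
  fin_cases i <;> simp [eR]

@[simp] lemma cons_val_mk_succ {α : Type*} {n : ℕ} (x : α) (u : Fin n → α) (i : ℕ)
    (h : i + 1 < n + 1) :
    Matrix.vecCons x u ⟨i + 1, h⟩ = u ⟨i, Nat.lt_of_succ_lt_succ h⟩ := rfl

lemma KSbases_eq (j : Fin 9) : KSbases j = (KSbasesZ j).image eR := by
  fin_cases j
  · show ({![0,0,0,1], ![0,0,1,0], ![1,1,0,0], ![1,-1,0,0]} : Finset (Fin 4 → ℝ)) = Finset.image eR ({![0,0,0,1], ![0,0,1,0], ![1,1,0,0], ![1,-1,0,0]} : Finset (Fin 4 → ℤ))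
    simp [Finset.image_insert, eR_vec]
  · show ({![0,0,0,1], ![0,1,0,0], ![1,0,1,0], ![1,0,-1,0]} : Finset (Fin 4 → ℝ)) = Finset.image eR ({![0,0,0,1], ![0,1,0,0], ![1,0,1,0], ![1,0,-1,0]} : Finset (Fin 4 → ℤ))
    simp [Finset.image_insert, eR_vec]
  · show ({![1,-1,1,-1], ![1,-1,-1,1], ![1,1,0,0], ![0,0,1,1]} : Finset (Fin 4 → ℝ)) = Finset.image eR ({![1,-1,1,-1], ![1,-1,-1,1], ![1,1,0,0], ![0,0,1,1]} : Finset (Fin 4 → ℤ))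
    simp [Finset.image_insert, eR_vec]
  · show ({![1,-1,1,-1], ![1,1,1,1], ![1,0,-1,0], ![0,1,0,-1]} : Finset (Fin 4 → ℝ)) = Finset.image eR ({![1,-1,1,-1], ![1,1,1,1], ![1,0,-1,0], ![0,1,0,-1]} : Finset (Fin 4 → ℤ))
    simp [Finset.image_insert, eR_vec]
  · show ({![0,0,1,0], ![0,1,0,0], ![1,0,0,1], ![1,0,0,-1]} : Finset (Fin 4 → ℝ)) = Finset.image eR ({![0,0,1,0], ![0,1,0,0], ![1,0,0,1], ![1,0,0,-1]} : Finset (Fin 4 → ℤ))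
    simp [Finset.image_insert, eR_vec]
  · show ({![1,-1,-1,1], ![1,1,1,1], ![1,0,0,-1], ![0,1,-1,0]} : Finset (Fin 4 → ℝ)) = Finset.image eR ({![1,-1,-1,1], ![1,1,1,1], ![1,0,0,-1], ![0,1,-1,0]} : Finset (Fin 4 → ℤ))
    simp [Finset.image_insert, eR_vec]
  · show ({![1,1,-1,1], ![1,1,1,-1], ![1,-1,0,0], ![0,0,1,1]} : Finset (Fin 4 → ℝ)) = Finset.image eR ({![1,1,-1,1], ![1,1,1,-1], ![1,-1,0,0], ![0,0,1,1]} : Finset (Fin 4 → ℤ))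
    simp [Finset.image_insert, eR_vec]
  · show ({![1,1,-1,1], ![-1,1,1,1], ![1,0,1,0], ![0,1,0,-1]} : Finset (Fin 4 → ℝ)) = Finset.image eR ({![1,1,-1,1], ![-1,1,1,1], ![1,0,1,0], ![0,1,0,-1]} : Finset (Fin 4 → ℤ))
    simp [Finset.image_insert, eR_vec]
  · show ({![1,1,1,-1], ![-1,1,1,1], ![1,0,0,1], ![0,1,-1,0]} : Finset (Fin 4 → ℝ)) = Finset.image eR ({![1,1,1,-1], ![-1,1,1,1], ![1,0,0,1], ![0,1,-1,0]} : Finset (Fin 4 → ℤ))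
    simp [Finset.image_insert, eR_vec]

lemma KS_Z (f : (Fin 4 → ℤ) → ℤ) :
    ∑ j : Fin 9, ∑ x ∈ KSbasesZ j, f x =
      2 * ∑ x ∈ (Finset.univ : Finset (Fin 9)).biUnion KSbasesZ, f x := by
  have hb : (Finset.univ : Finset (Fin 9)).biUnion KSbasesZ =
      {![0,0,0,1], ![0,0,1,0], ![1,1,0,0], ![1,-1,0,0],
       ![0,1,0,0], ![1,0,1,0], ![1,0,-1,0],
       ![1,-1,1,-1], ![1,-1,-1,1], ![0,0,1,1],
       ![1,1,1,1], ![0,1,0,-1],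
       ![1,0,0,1], ![1,0,0,-1],
       ![0,1,-1,0],
       ![1,1,-1,1], ![1,1,1,-1], ![-1,1,1,1]} := by decide
  rw [hb]
  rw [Fin.sum_univ_succ, Fin.sum_univ_succ, Fin.sum_univ_succ, Fin.sum_univ_succ,
    Fin.sum_univ_succ, Fin.sum_univ_succ, Fin.sum_univ_succ, Fin.sum_univ_succ,
    Fin.sum_univ_one]
  simp only [KSbasesZ, Matrix.cons_val_zero, Matrix.cons_val_one, Matrix.head_cons,
    Matrix.cons_val_succ]
  repeat rw [Finset.sum_insert (by decide)]
  repeat rw [Finset.sum_singleton]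
  ring

/-- For any integer-valued function `v` on vectors, the sum over the nine bases
of the values of their elements is twice the sum of `v` over the 18 distinct
vectors; in particular this double sum is even. -/
theorem KS_double_count (v : (Fin 4 → ℝ) → ℤ) :
    ∑ j : Fin 9, ∑ x ∈ KSbases j, v x =
      2 * ∑ x ∈ (Finset.univ : Finset (Fin 9)).biUnion KSbases, v x := by
  have himg : (Finset.univ : Finset (Fin 9)).biUnion KSbases =
      ((Finset.univ : Finset (Fin 9)).biUnion KSbasesZ).image eR := by
    rw [Finset.biUnion_image]
    exact Finset.biUnion_congr rfl fun j _ => KSbases_eq j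
  calc ∑ j : Fin 9, ∑ x ∈ KSbases j, v x
      = ∑ j : Fin 9, ∑ w ∈ KSbasesZ j, v (eR w) := by
        refine Finset.sum_congr rfl fun j _ => ?_
        rw [KSbases_eq j, Finset.sum_image (fun a _ b _ h => eR_inj h)]
    _ = 2 * ∑ w ∈ (Finset.univ : Finset (Fin 9)).biUnion KSbasesZ, v (eR w) := KS_Z (v ∘ eR)
    _ = 2 * ∑ x ∈ (Finset.univ : Finset (Fin 9)).biUnion KSbases, v x := by
        rw [himg, Finset.sum_image (fun a _ b _ h => eR_inj h)]
end

section
/- (Kochen–Specker non-colorability) There is no function v from the 18 distinct vectors to {0,1} such that for every j ∈ {1,…,9} exactly one of the four vectors of S_j is assigned the value 1 (and the other three the value 0). -/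
open Matrix

lemma card_filter_quad {a b c d : Fin 4 → ℝ} (p : (Fin 4 → ℝ) → Bool)
    (hab : a≠b) (hac : a≠c) (had : a≠d) (hbc : b≠c) (hbd : b≠d) (hcd : c≠d) :
    (({a,b,c,d} : Finset (Fin 4 → ℝ)).filter (fun x => p x = true)).card =
      (if p a then 1 else 0) + (if p b then 1 else 0) + (if p c then 1 else 0) + (if p d then 1 else 0) := by
  classical
  rw [show ({a,b,c,d} : Finset (Fin 4 → ℝ)) = insert a (insert b (insert c {d})) from rfl,
    Finset.card_filter,
    Finset.sum_insert (by simp [hab, hac, had]),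
    Finset.sum_insert (by simp [hbc, hbd]),
    Finset.sum_insert (by simp [hcd]),
    Finset.sum_singleton]
  ring

/-- Kochen–Specker non-colorability: there is no `{0,1}`-valued assignment to
the 18 vectors such that every one of the nine bases contains exactly one
vector with value `1` (and three with value `0`). -/
theorem KS_noncolorable :
    ¬ ∃ v : (Fin 4 → ℝ) → Bool,
      ∀ j : Fin 9, ((KSbases j).filter (fun x => v x = true)).card = 1 := by
  rintro ⟨v, hv⟩
  have h0 : (({![0,0,0,1], ![0,0,1,0], ![1,1,0,0], ![1,-1,0,0]} : Finset (Fin 4 → ℝ)).filter (fun x => v x = true)).card = 1 := hv 0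
  rw [card_filter_quad v (by norm_num [funext_iff, Fin.forall_fin_succ]) (by norm_num [funext_iff, Fin.forall_fin_succ]) (by norm_num [funext_iff, Fin.forall_fin_succ]) (by norm_num [funext_iff, Fin.forall_fin_succ]) (by norm_num [funext_iff, Fin.forall_fin_succ]) (by norm_num [funext_iff, Fin.forall_fin_succ])] at h0
  have h1 : (({![0,0,0,1], ![0,1,0,0], ![1,0,1,0], ![1,0,-1,0]} : Finset (Fin 4 → ℝ)).filter (fun x => v x = true)).card = 1 := hv 1
  rw [card_filter_quad v (by norm_num [funext_iff, Fin.forall_fin_succ]) (by norm_num [funext_iff, Fin.forall_fin_succ]) (by norm_num [funext_iff, Fin.forall_fin_succ]) (by norm_num [funext_iff, Fin.forall_fin_succ]) (by norm_num [funext_iff, Fin.forall_fin_succ]) (by norm_num [funext_iff, Fin.forall_fin_succ])] at h1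
  have h2 : (({![1,-1,1,-1], ![1,-1,-1,1], ![1,1,0,0], ![0,0,1,1]} : Finset (Fin 4 → ℝ)).filter (fun x => v x = true)).card = 1 := hv 2
  rw [card_filter_quad v (by norm_num [funext_iff, Fin.forall_fin_succ]) (by norm_num [funext_iff, Fin.forall_fin_succ]) (by norm_num [funext_iff, Fin.forall_fin_succ]) (by norm_num [funext_iff, Fin.forall_fin_succ]) (by norm_num [funext_iff, Fin.forall_fin_succ]) (by norm_num [funext_iff, Fin.forall_fin_succ])] at h2
  have h3 : (({![1,-1,1,-1], ![1,1,1,1], ![1,0,-1,0], ![0,1,0,-1]} : Finset (Fin 4 → ℝ)).filter (fun x => v x = true)).card = 1 := hv 3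
  rw [card_filter_quad v (by norm_num [funext_iff, Fin.forall_fin_succ]) (by norm_num [funext_iff, Fin.forall_fin_succ]) (by norm_num [funext_iff, Fin.forall_fin_succ]) (by norm_num [funext_iff, Fin.forall_fin_succ]) (by norm_num [funext_iff, Fin.forall_fin_succ]) (by norm_num [funext_iff, Fin.forall_fin_succ])] at h3
  have h4 : (({![0,0,1,0], ![0,1,0,0], ![1,0,0,1], ![1,0,0,-1]} : Finset (Fin 4 → ℝ)).filter (fun x => v x = true)).card = 1 := hv 4
  rw [card_filter_quad v (by norm_num [funext_iff, Fin.forall_fin_succ]) (by norm_num [funext_iff, Fin.forall_fin_succ]) (by norm_num [funext_iff, Fin.forall_fin_succ]) (by norm_num [funext_iff, Fin.forall_fin_succ]) (by norm_num [funext_iff, Fin.forall_fin_succ]) (by norm_num [funext_iff, Fin.forall_fin_succ])] at h4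
  have h5 : (({![1,-1,-1,1], ![1,1,1,1], ![1,0,0,-1], ![0,1,-1,0]} : Finset (Fin 4 → ℝ)).filter (fun x => v x = true)).card = 1 := hv 5
  rw [card_filter_quad v (by norm_num [funext_iff, Fin.forall_fin_succ]) (by norm_num [funext_iff, Fin.forall_fin_succ]) (by norm_num [funext_iff, Fin.forall_fin_succ]) (by norm_num [funext_iff, Fin.forall_fin_succ]) (by norm_num [funext_iff, Fin.forall_fin_succ]) (by norm_num [funext_iff, Fin.forall_fin_succ])] at h5
  have h6 : (({![1,1,-1,1], ![1,1,1,-1], ![1,-1,0,0], ![0,0,1,1]} : Finset (Fin 4 → ℝ)).filter (fun x => v x = true)).card = 1 := hv 6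
  rw [card_filter_quad v (by norm_num [funext_iff, Fin.forall_fin_succ]) (by norm_num [funext_iff, Fin.forall_fin_succ]) (by norm_num [funext_iff, Fin.forall_fin_succ]) (by norm_num [funext_iff, Fin.forall_fin_succ]) (by norm_num [funext_iff, Fin.forall_fin_succ]) (by norm_num [funext_iff, Fin.forall_fin_succ])] at h6
  have h7 : (({![1,1,-1,1], ![-1,1,1,1], ![1,0,1,0], ![0,1,0,-1]} : Finset (Fin 4 → ℝ)).filter (fun x => v x = true)).card = 1 := hv 7
  rw [card_filter_quad v (by norm_num [funext_iff, Fin.forall_fin_succ]) (by norm_num [funext_iff, Fin.forall_fin_succ]) (by norm_num [funext_iff, Fin.forall_fin_succ]) (by norm_num [funext_iff, Fin.forall_fin_succ]) (by norm_num [funext_iff, Fin.forall_fin_succ]) (by norm_num [funext_iff, Fin.forall_fin_succ])] at h7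
  have h8 : (({![1,1,1,-1], ![-1,1,1,1], ![1,0,0,1], ![0,1,-1,0]} : Finset (Fin 4 → ℝ)).filter (fun x => v x = true)).card = 1 := hv 8
  rw [card_filter_quad v (by norm_num [funext_iff, Fin.forall_fin_succ]) (by norm_num [funext_iff, Fin.forall_fin_succ]) (by norm_num [funext_iff, Fin.forall_fin_succ]) (by norm_num [funext_iff, Fin.forall_fin_succ]) (by norm_num [funext_iff, Fin.forall_fin_succ]) (by norm_num [funext_iff, Fin.forall_fin_succ])] at h8
  omega
end
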